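/- arXiv:1803.07053 — 4 statements merged into one kernel-verified Lean document; each statement's English description precedes it below -/
import Mathlib

section
/- For every n ≥ 1, 1/4 + ∑_{i=2}^n 1/(2i+1) ≤ (1/2)·log(n+1). -/
open Finset

lemma expAux (t : ℝ) (h0 : 0 ≤ t) (h1 : t ≤ 1) : Real.exp t * (2 - t) ≤ 2 + t := by
  have hb := Real.exp_bound' h0 h1 (n := 4) (by norm_num)
  simp [Finset.sum_range_succ, Nat.factorial] at hb
  nlinarith [pow_nonneg h0 3, pow_nonneg h0 4, pow_nonneg h0 5, sq_nonneg t]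

lemma logAux (x : ℝ) (h0 : 0 < x) (h1 : x ≤ 1) : 2 * x / (2 + x) ≤ Real.log (1 + x) := by
  have h2 : (0:ℝ) < 2 + x := by linarith
  have ht0 : 0 ≤ 2 * x / (2 + x) := by positivity
  have ht1 : 2 * x / (2 + x) ≤ 1 := by
    rw [div_le_one h2]; linarith
  have h := expAux _ ht0 ht1
  have hE : Real.exp (2 * x / (2 + x)) ≤ 1 + x := by
    have h3 : (0:ℝ) < 2 - 2 * x / (2 + x) := by
      have : 2 * x / (2 + x) ≤ 1 := ht1
      linarith
    have h4 : Real.exp (2 * x / (2 + x)) ≤ (2 + 2 * x / (2 + x)) / (2 - 2 * x / (2 + x)) := by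
      rw [le_div_iff₀ h3]; exact h
    have h5 : (2 + 2 * x / (2 + x)) / (2 - 2 * x / (2 + x)) = 1 + x := by
      rw [div_eq_iff (ne_of_gt h3)]
      field_simp
      ring
    linarith [h4, h5.le, h5.ge]
  calc 2 * x / (2 + x) = Real.log (Real.exp (2 * x / (2 + x))) := (Real.log_exp _).symm
    _ ≤ Real.log (1 + x) := Real.log_le_log (Real.exp_pos _) hE

lemma stepAux (i : ℕ) (hi : 1 ≤ i) :
    1 / (2 * (i : ℝ) + 1) ≤ (1 / 2) * (Real.log (i + 1) - Real.log i) := by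
  have hi' : (1:ℝ) ≤ i := by exact_mod_cast hi
  have hipos : (0:ℝ) < i := by linarith
  have h := logAux (1 / i) (by positivity) (by rw [div_le_one hipos]; linarith)
  have heq : Real.log (1 + 1 / (i:ℝ)) = Real.log (i + 1) - Real.log i := by
    rw [← Real.log_div (by positivity) (ne_of_gt hipos)]
    congr 1
    field_simp
  rw [heq] at h
  have : 2 * (1 / (i:ℝ)) / (2 + 1 / i) = 2 / (2 * i + 1) := by
    rw [div_eq_div_iff (by positivity) (by positivity)]
    field_simp
  rw [this] at h
  have h2 : 2 / (2 * (i:ℝ) + 1) = 2 * (1 / (2 * i + 1)) := by ring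
  rw [h2] at h
  linarith

/-- For every `n ≥ 1`, `1/4 + ∑_{i=2}^n 1/(2i+1) ≤ (1/2)·log(n+1)`. -/
theorem odd_harmonic_log_bound (n : ℕ) (hn : 1 ≤ n) :
    1 / 4 + ∑ i ∈ Icc 2 n, 1 / (2 * (i : ℝ) + 1) ≤ (1 / 2) * Real.log (n + 1) := by
  induction n with
  | zero => omega
  | succ m ih =>
    rcases Nat.eq_or_lt_of_le hn with h1 | h1
    · -- m + 1 = 1, i.e. m = 0
      have hm : m = 0 := by omega
      subst hm
      simp only [show Icc 2 1 = (∅ : Finset ℕ) by decide, sum_empty, add_zero]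
      have := Real.log_two_gt_d9
      norm_num
      linarith
    · have hm : 1 ≤ m := by omega
      have ihm := ih hm
      rw [Finset.sum_Icc_succ_top (by omega : 2 ≤ m + 1)]
      have hstep := stepAux (m + 1) (by omega)
      push_cast at hstep ihm ⊢
      linarith
end

section
/- For nonnegative reals z_k(i) (k = 1,…,n, i = 0,…,k) satisfying ∑_{i=0}^k z_k(i)² ≤ δ for each k, the objective ∑_{i=0}^{n−1} (1/(n−i+1))² (∑_{k=i+1}^n z_k(i))² is bounded above by δ·(1/4 + ∑_{i=2}^n 1/(2i+1)). -/
/-!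
Weak duality with the multipliers `λ_n = 1/4`, `λ_k = 1/(2(n-k)+3)` for `k < n`. Since
`1/λ_k = (n-k+2)² - (n-k+1)²` for `k < n` and `1/λ_n = 2²`, the sum `∑_{k=i+1}^n 1/λ_k`
telescopes to `(n-i+1)²`, so the weighted Cauchy–Schwarz inequality
bounds the `i`-th primal term by `∑_{k>i} λ_k z_k(i)²`. Summing over `i` and exchanging the
sums, the constraints give at most `δ ∑_k λ_k`, which is the dual value.
-/

open Finset

theorem sum_Icc_sub_eq_sum_range {M : Type*} [AddCommMonoid M] (f : ℕ → M) {i n : ℕ}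
    (hin : i ≤ n) : ∑ k ∈ Icc (i + 1) n, f (n - k) = ∑ j ∈ range (n - i), f j := by
  refine sum_nbij' (fun k ↦ n - k) (fun j ↦ n - j) ?_ ?_ ?_ ?_ fun _ _ ↦ rfl <;>
    intro k hk <;> simp only [mem_Icc, mem_range] at hk ⊢ <;> omega

/-- The dual multiplier `λ_k` of the constraint on `z_k`, indexed by `j = n - k`. -/
noncomputable def dualWeight (j : ℕ) : ℝ :=
  if j = 0 then 1 / 4 else 1 / (2 * j + 3)

lemma dualWeight_pos (j : ℕ) : 0 < dualWeight j := by
  unfold dualWeight; split <;> positivity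

lemma dualWeight_succ (j : ℕ) : dualWeight (j + 1) = 1 / (2 * (j + 1 : ℕ) + 3) := by
  simp [dualWeight]

lemma sum_range_inv_dualWeight (m : ℕ) :
    ∑ j ∈ range (m + 1), (dualWeight j)⁻¹ = ((m : ℝ) + 2) ^ 2 := by
  induction m with
  | zero => norm_num [dualWeight]
  | succ m ih =>
    rw [sum_range_succ, ih, dualWeight_succ, one_div, inv_inv]
    push_cast
    ring

lemma sum_range_dualWeight_le (n : ℕ) :
    ∑ j ∈ range n, dualWeight j ≤ 1 / 4 + ∑ i ∈ Icc 2 n, 1 / (2 * (i : ℝ) + 1) := by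
  suffices h : ∀ m : ℕ, ∑ j ∈ range (m + 1), dualWeight j =
      1 / 4 + ∑ i ∈ Icc 2 (m + 1), 1 / (2 * (i : ℝ) + 1) by
    cases n with
    | zero => norm_num
    | succ m => exact (h m).le
  intro m
  induction m with
  | zero => norm_num [dualWeight]
  | succ m ih =>
    rw [sum_range_succ, ih, sum_Icc_succ_top (b := m + 1) (by omega), dualWeight_succ]
    push_cast
    ring_nf

lemma sq_sum_le_sum_dualWeight_mul_sq (x : ℕ → ℝ) {i n : ℕ} (hin : i < n) :
    (1 / ((n : ℝ) - i + 1)) ^ 2 * (∑ k ∈ Icc (i + 1) n, x k) ^ 2 ≤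
      ∑ k ∈ Icc (i + 1) n, dualWeight (n - k) * x k ^ 2 := by
  have hinv : ∑ k ∈ Icc (i + 1) n, (dualWeight (n - k))⁻¹ = ((n : ℝ) - i + 1) ^ 2 := by
    obtain ⟨m, rfl⟩ := Nat.exists_eq_add_of_lt hin
    rw [sum_Icc_sub_eq_sum_range (fun j ↦ (dualWeight j)⁻¹) hin.le,
      show i + m + 1 - i = m + 1 by omega, sum_range_inv_dualWeight]
    push_cast
    ring
  have hcs := sq_sum_div_le_sum_sq_div (Icc (i + 1) n) x
    (g := fun k ↦ (dualWeight (n - k))⁻¹) fun k _ ↦ inv_pos.2 (dualWeight_pos _)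
  rw [hinv] at hcs
  simpa [div_eq_mul_inv, mul_comm] using hcs

theorem primal_le_dual_general (n : ℕ) (δ : ℝ) (hδ : 0 < δ) (z : ℕ → ℕ → ℝ)
    (hcon : ∀ k ∈ Icc 1 n, ∑ i ∈ Icc 0 k, (z k i) ^ 2 ≤ δ) :
    ∑ i ∈ range n, (1 / ((n : ℝ) - (i : ℝ) + 1)) ^ 2 * (∑ k ∈ Icc (i + 1) n, z k i) ^ 2 ≤
      δ * (1 / 4 + ∑ i ∈ Icc 2 n, 1 / (2 * (i : ℝ) + 1)) := by
  calc _ ≤ ∑ i ∈ range n, ∑ k ∈ Icc (i + 1) n, dualWeight (n - k) * z k i ^ 2 :=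
        sum_le_sum fun i hi ↦ sq_sum_le_sum_dualWeight_mul_sq _ (mem_range.1 hi)
    _ = ∑ k ∈ Icc 1 n, dualWeight (n - k) * ∑ i ∈ range k, z k i ^ 2 := by
        simp_rw [mul_sum]
        exact sum_comm' fun i k ↦ by simp only [mem_range, mem_Icc]; omega
    _ ≤ ∑ k ∈ Icc 1 n, dualWeight (n - k) * δ := by
        refine sum_le_sum fun k hk ↦ mul_le_mul_of_nonneg_left ?_ (dualWeight_pos _).le
        calc ∑ i ∈ range k, z k i ^ 2 ≤ ∑ i ∈ Icc 0 k, z k i ^ 2 :=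
              sum_le_sum_of_subset_of_nonneg (fun i hi ↦ by simp at hi ⊢; omega)
                fun _ _ _ ↦ sq_nonneg _
          _ ≤ δ := hcon k hk
    _ = δ * ∑ j ∈ range n, dualWeight j := by
        rw [← sum_mul, mul_comm]
        simpa using congrArg (δ * ·) (sum_Icc_sub_eq_sum_range dualWeight n.zero_le)
    _ ≤ δ * (1 / 4 + ∑ i ∈ Icc 2 n, 1 / (2 * (i : ℝ) + 1)) :=
        mul_le_mul_of_nonneg_left (sum_range_dualWeight_le n) hδ.le

/-- Weak duality bound for the primal problem `𝒫₁(n)`: for nonnegative `z_k(i)`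
with `∑_{i=0}^k z_k(i)² ≤ δ` for each `k = 1,…,n`, the primal objective is at most
the dual optimal value `δ(1/4 + ∑_{i=2}^n 1/(2i+1))`. -/
theorem primal_le_dual (n : ℕ) (δ : ℝ) (hδ : 0 < δ) (z : ℕ → ℕ → ℝ)
    (hz : ∀ k ∈ Icc 1 n, ∀ i ∈ Icc 0 k, 0 ≤ z k i)
    (hcon : ∀ k ∈ Icc 1 n, ∑ i ∈ Icc 0 k, (z k i) ^ 2 ≤ δ) :
    ∑ i ∈ range n, (1 / ((n : ℝ) - (i : ℝ) + 1)) ^ 2 * (∑ k ∈ Icc (i + 1) n, z k i) ^ 2 ≤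
      δ * (1 / 4 + ∑ i ∈ Icc 2 n, 1 / (2 * (i : ℝ) + 1)) :=
  primal_le_dual_general n δ hδ z hcon
end

section
/- For nonnegative reals z_k(i) with ∑_{i=0}^k z_k(i)² ≤ δ for each k = 1,…,n, the value ∑_{i=0}^{n−1} (1/(n−i+1))² (∑_{k=i+1}^n z_k(i))² is at most (δ/2)·log(n+1). -/
/-!
Put the weights `w k = 2 (n - k) + 3` on the columns. Since `∑_{k=i+1}^n w k = (n - i + 1)² - 1`,
Sedrakyan's form of Cauchy–Schwarz bounds the `i`-th term by `∑_{k>i} z_k(i)² / w k`. Exchanging the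
sums and using the constraint for each `k` gives at most `δ ∑_{k=1}^n 1 / w k`, and
`2 / (2a + 1) ≤ log (a + 1) - log a` (the first term of the series for `log (1 + 1/a)`) telescopes
this to `(δ / 2) log (n + 1)`.
-/

open Finset Real

theorem Real.two_div_two_mul_add_one_le_log_add_one_sub_log {a : ℝ} (ha : 0 < a) :
    2 / (2 * a + 1) ≤ log (a + 1) - log a := by
  have hseries := le_hasSum (hasSum_log_one_add_inv ha) 0 fun k _ ↦ by positivity
  have hquot : 1 + a⁻¹ = (a + 1) / a := by field_simp
  rw [hquot, log_div (by positivity) ha.ne'] at hseries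
  rw [div_eq_mul_inv]
  simpa using hseries

theorem Finset.sum_Ico_sub_succ {M : Type*} [AddCommGroup M] (f : ℕ → M) {m n : ℕ} (hmn : m ≤ n) :
    ∑ k ∈ Ico m n, (f k - f (k + 1)) = f m - f n := by
  rw [← neg_sub, ← sum_Ico_sub f hmn, ← sum_neg_distrib]
  simp only [neg_sub]

theorem sum_Icc_odd_weight {i n : ℕ} (hin : i ≤ n) :
    ∑ k ∈ Icc (i + 1) n, (2 * ((n : ℝ) - k) + 3) = ((n : ℝ) - i + 1) ^ 2 - 1 := by
  have htel := sum_Ico_sub_succ (fun k : ℕ ↦ ((n : ℝ) - k + 2) ^ 2) (by omega : i + 1 ≤ n + 1)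
  rw [Ico_add_one_right_eq_Icc] at htel
  push_cast at htel
  convert htel using 1
  · exact sum_congr rfl fun k _ ↦ by ring
  · ring

theorem sum_Icc_inv_odd_weight_le_log (n : ℕ) :
    ∑ k ∈ Icc 1 n, 1 / (2 * ((n : ℝ) - k) + 3) ≤ log (n + 1) / 2 := by
  have hterm : ∀ k ∈ Icc 1 n, 1 / (2 * ((n : ℝ) - k) + 3) ≤
      (log ((n : ℝ) - k + 2) - log ((n : ℝ) - (k + 1 : ℕ) + 2)) / 2 := by
    intro k hk
    have hkn : (k : ℝ) ≤ n := by exact_mod_cast (mem_Icc.mp hk).2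
    have hstep := two_div_two_mul_add_one_le_log_add_one_sub_log (a := (n : ℝ) - k + 1) (by linarith)
    rw [show (n : ℝ) - k + 1 + 1 = n - k + 2 by ring,
      show 2 * ((n : ℝ) - k + 1) + 1 = 2 * (n - k) + 3 by ring] at hstep
    rw [Nat.cast_add_one, show (n : ℝ) - (k + 1) + 2 = n - k + 1 by ring,
      show 1 / (2 * ((n : ℝ) - k) + 3) = 2 / (2 * (n - k) + 3) / 2 by ring]
    exact div_le_div_of_nonneg_right hstep zero_le_two
  have htel := sum_Ico_sub_succ (fun k : ℕ ↦ log ((n : ℝ) - k + 2) / 2) (Nat.le_add_left 1 n)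
  rw [Ico_add_one_right_eq_Icc] at htel
  calc ∑ k ∈ Icc 1 n, 1 / (2 * ((n : ℝ) - k) + 3)
      ≤ ∑ k ∈ Icc 1 n, (log ((n : ℝ) - k + 2) / 2 - log ((n : ℝ) - (k + 1 : ℕ) + 2) / 2) :=
        sum_le_sum fun k hk ↦ (hterm k hk).trans_eq (sub_div _ _ _)
    _ = log (n + 1) / 2 := by
      rw [htel]; norm_num; ring_nf

theorem sq_div_sq_sum_Icc_le_sum_sq_div_odd_weight {i n : ℕ} (hin : i < n) (x : ℕ → ℝ) :
    (1 / ((n : ℝ) - i + 1)) ^ 2 * (∑ k ∈ Icc (i + 1) n, x k) ^ 2 ≤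
      ∑ k ∈ Icc (i + 1) n, x k ^ 2 / (2 * ((n : ℝ) - k) + 3) := by
  have hin' : (i : ℝ) + 1 ≤ n := by exact_mod_cast hin
  have hweight : ∀ k ∈ Icc (i + 1) n, 0 < 2 * ((n : ℝ) - k) + 3 := fun k hk ↦ by
    have : (k : ℝ) ≤ n := by exact_mod_cast (mem_Icc.mp hk).2
    linarith
  have hsedrakyan := sq_sum_div_le_sum_sq_div _ x hweight
  rw [sum_Icc_odd_weight hin.le] at hsedrakyan
  refine le_trans ?_ hsedrakyan
  rw [div_pow, one_pow, one_div_mul_eq_div]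
  exact div_le_div_of_nonneg_left (sq_nonneg _) (by nlinarith) (by linarith)

theorem primal_le_log_bound_general (n : ℕ) (δ : ℝ) (hδ : 0 < δ) (z : ℕ → ℕ → ℝ)
    (hcon : ∀ k ∈ Icc 1 n, ∑ i ∈ Icc 0 k, (z k i) ^ 2 ≤ δ) :
    ∑ i ∈ range n, (1 / ((n : ℝ) - (i : ℝ) + 1)) ^ 2 * (∑ k ∈ Icc (i + 1) n, z k i) ^ 2 ≤
      (δ / 2) * Real.log (n + 1) := by
  have hrow : ∀ k ∈ Icc 1 n, ∑ i ∈ range k, z k i ^ 2 ≤ δ := fun k hk ↦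
    (sum_le_sum_of_subset_of_nonneg (fun i hi ↦ by simp only [mem_range, mem_Icc] at hi ⊢; omega)
      fun i _ _ ↦ sq_nonneg _).trans (hcon k hk)
  calc _ ≤ ∑ i ∈ range n, ∑ k ∈ Icc (i + 1) n, z k i ^ 2 / (2 * ((n : ℝ) - k) + 3) :=
        sum_le_sum fun i hi ↦ sq_div_sq_sum_Icc_le_sum_sq_div_odd_weight (mem_range.mp hi) _
    _ = ∑ k ∈ Icc 1 n, (∑ i ∈ range k, z k i ^ 2) * (1 / (2 * ((n : ℝ) - k) + 3)) := by
        rw [sum_comm' (t' := Icc 1 n) (s' := range) fun i k ↦ by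
          simp only [mem_range, mem_Icc]; omega]
        simp only [sum_div, mul_one_div]
    _ ≤ ∑ k ∈ Icc 1 n, δ * (1 / (2 * ((n : ℝ) - k) + 3)) := by
        refine sum_le_sum fun k hk ↦ mul_le_mul_of_nonneg_right (hrow k hk) ?_
        have : (k : ℝ) ≤ n := by exact_mod_cast (mem_Icc.mp hk).2
        exact one_div_nonneg.mpr (by linarith)
    _ ≤ δ * (log (n + 1) / 2) := by
        rw [← mul_sum]
        exact mul_le_mul_of_nonneg_left (sum_Icc_inv_odd_weight_le_log n) hδ.le
    _ = _ := by ring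

/-- Combined primal-dual bound: for nonnegative `z_k(i)` with `∑_{i=0}^k z_k(i)² ≤ δ`
for each `k = 1,…,n`, the primal objective is at most `(δ/2)·log(n+1)`. -/
theorem primal_le_log_bound (n : ℕ) (hn : 1 ≤ n) (δ : ℝ) (hδ : 0 < δ) (z : ℕ → ℕ → ℝ)
    (hz : ∀ k ∈ Icc 1 n, ∀ i ∈ Icc 0 k, 0 ≤ z k i)
    (hcon : ∀ k ∈ Icc 1 n, ∑ i ∈ Icc 0 k, (z k i) ^ 2 ≤ δ) :
    ∑ i ∈ range n, (1 / ((n : ℝ) - (i : ℝ) + 1)) ^ 2 * (∑ k ∈ Icc (i + 1) n, z k i) ^ 2 ≤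
      (δ / 2) * Real.log (n + 1) :=
  primal_le_log_bound_general n δ hδ z hcon
end

section
/- Suppose (A, C) is such that A + KC is Schur stable for some K, and let E(K) be the system mapping w to the observer error e with ‖E(K)‖_{p→q} its induced norm. If a trajectory of x(t+1)=Ax(t)+Bw(t), y(t)=Cx(t)+Dw(t) with x(0)=0 satisfies ‖w‖_p ≤ 1 and y(t) = 0 for all t = 0,…,T, then ‖x(0:T)‖_q ≤ ‖E(K)‖_{p→q}. -/
open Matrix

/-- Lemma (zero output bounds the state): suppose `K` is such that the error system
`E(K)` (state matrix `A+KC`, input matrix `B+KD`, output the state itself) has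
`ℓ∞ → ℓ∞` induced norm at most `γ`, i.e. every solution of
`e(t+1) = (A+KC) e(t) + (B+KD) w(t)`, `e(0)=0`, with `‖w‖_∞ ≤ 1` satisfies `‖e‖_∞ ≤ γ`.
If a trajectory of `x(t+1)=Ax(t)+Bw(t)`, `y(t)=Cx(t)+Dw(t)`, `x(0)=0` has `‖w‖_∞ ≤ 1`
and `y(t) = 0` for all `t ≤ T`, then `‖x(0:T)‖_∞ ≤ γ`. -/
theorem zero_output_state_bound (n l m : ℕ)
    (A : Matrix (Fin n) (Fin n) ℝ) (B : Matrix (Fin n) (Fin l) ℝ)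
    (C : Matrix (Fin m) (Fin n) ℝ) (D : Matrix (Fin m) (Fin l) ℝ)
    (K : Matrix (Fin n) (Fin m) ℝ) (γ : ℝ)
    (hEK : ∀ (w : ℕ → Fin l → ℝ) (e : ℕ → Fin n → ℝ),
      (∀ t i, |w t i| ≤ 1) → e 0 = 0 →
      (∀ t, e (t + 1) = (A + K * C) *ᵥ e t + (B + K * D) *ᵥ w t) →
      ∀ t i, |e t i| ≤ γ)
    (w : ℕ → Fin l → ℝ) (x : ℕ → Fin n → ℝ) (y : ℕ → Fin m → ℝ) (T : ℕ)
    (hw : ∀ t i, |w t i| ≤ 1)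
    (hx0 : x 0 = 0)
    (hx : ∀ t, x (t + 1) = A *ᵥ x t + B *ᵥ w t)
    (hy : ∀ t, y t = C *ᵥ x t + D *ᵥ w t)
    (hy0 : ∀ t ≤ T, y t = 0) :
    ∀ t ≤ T, ∀ i, |x t i| ≤ γ := by
  -- define the error trajectory for all time
  let e : ℕ → Fin n → ℝ := fun t => Nat.rec (0 : Fin n → ℝ)
    (fun t et => (A + K * C) *ᵥ et + (B + K * D) *ᵥ w t) t
  have he0 : e 0 = 0 := rfl
  have heS : ∀ t, e (t + 1) = (A + K * C) *ᵥ e t + (B + K * D) *ᵥ w t := fun t => rfl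
  have hbound := hEK w e hw he0 heS
  -- e agrees with x up to time T
  have hagree : ∀ t ≤ T, e t = x t := by
    intro t ht
    induction t with
    | zero => rw [he0, hx0]
    | succ t ih =>
      have ht' : t ≤ T := Nat.le_of_lt (Nat.lt_of_lt_of_le (Nat.lt_succ_self t) ht)
      have ihx := ih ht'
      have hyt : C *ᵥ x t + D *ᵥ w t = 0 := by
        rw [← hy t]; exact hy0 t ht'
      rw [heS t, ihx, hx t]
      rw [Matrix.add_mulVec, Matrix.add_mulVec, ← Matrix.mulVec_mulVec,
        ← Matrix.mulVec_mulVec]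
      have : K *ᵥ (C *ᵥ x t) + K *ᵥ (D *ᵥ w t) = 0 := by
        rw [← Matrix.mulVec_add, hyt, Matrix.mulVec_zero]
      calc A *ᵥ x t + K *ᵥ (C *ᵥ x t) + (B *ᵥ w t + K *ᵥ (D *ᵥ w t))
          = A *ᵥ x t + B *ᵥ w t + (K *ᵥ (C *ᵥ x t) + K *ᵥ (D *ᵥ w t)) := by ring_nf
        _ = A *ᵥ x t + B *ᵥ w t := by rw [this, add_zero]
  intro t ht i
  rw [← hagree t ht]
  exact hbound t i
end
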